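/- Let F = GF(q) be a finite field with q elements, R the ring of ternions over F, and n ≥ 1. If X ∈ R^{n+1} is a vector with I_X = rad R (the right ideal generated by the coordinates of X equals the Jacobson radical of R), then the number of non-unimodular free cyclic submodules of R^{n+1} containing X equals (q + 1)(q^n − 1)/(q − 1), i.e., this number N₂ satisfies (q − 1)·N₂ = (q + 1)(q^n − 1). -/

import Mathlib

/-!
A free generator `Y` of a non-unimodular cyclic submodule of `R^{n+1}` is exactly a vector with
entries `Yᵢ = (0 bᵢ; 0 cᵢ)` where `b, c ∈ F^{n+1}` are linearly independent, and `X = (0 yᵢ; 0 0)`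
lies in `R·Y` iff `y ∈ span(b, c)`. Two free generators span the same submodule iff they differ by
a unit of `R`, so the count times `|Rˣ| = (q - 1)² q` is the number of independent pairs `(b, c)`
whose span contains `y`: all `(q^{n+1} - 1)(q^{n+1} - q)` independent pairs minus the
`(q^{n+1} - q)(q^{n+1} - q²)` pairs with `(y, b, c)` independent, i.e. `(q² - 1)(q^{n+1} - q)`.
-/

set_option synthInstance.maxHeartbeats 1000000
set_option maxHeartbeats 1000000

/-- The ring of ternions over a field `F`: the subring of `2×2` matrices over `F`
consisting of all upper triangular matrices. -/
def ternions (F : Type) [Field F] : Subring (Matrix (Fin 2) (Fin 2) F) where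
  carrier := {A | A 1 0 = 0}
  zero_mem' := by simp
  one_mem' := by simp [Matrix.one_apply]
  add_mem' := by
    intro a b ha hb
    simp only [Set.mem_setOf_eq, Matrix.add_apply] at *
    simp [ha, hb]
  neg_mem' := by
    intro a ha
    simp only [Set.mem_setOf_eq, Matrix.neg_apply] at *
    simp [ha]
  mul_mem' := by
    intro a b ha hb
    simp only [Set.mem_setOf_eq, Matrix.mul_apply, Fin.sum_univ_two] at *
    simp [ha, hb]


open Module Submodule

section FreeCyclic

variable (R : Type*) {M : Type*} [Ring R] [AddCommGroup M] [Module R M]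

def IsUnimodular (Y : M) : Prop := ∃ φ : M →ₗ[R] R, φ Y = 1

variable {R}

theorem IsUnimodular.of_units_smul {u : Rˣ} {Y : M} (h : IsUnimodular R (u • Y)) :
    IsUnimodular R Y := by
  obtain ⟨φ, hφ⟩ := h
  have hφY : φ Y = ↑u⁻¹ := by
    rw [Units.smul_def, map_smul, smul_eq_mul] at hφ
    exact Units.eq_inv_of_mul_eq_one_left hφ
  exact ⟨LinearMap.toSpanSingleton R R (u : R) ∘ₗ φ, by simp [hφY]⟩

theorem isUnimodular_iff_exists_sum_mul_eq_one {ι : Type*} [Fintype ι] [DecidableEq ι]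
    (Y : ι → R) : IsUnimodular R Y ↔ ∃ x : ι → R, ∑ i, Y i * x i = 1 := by
  constructor
  · rintro ⟨φ, hφ⟩
    exact ⟨fun i => φ fun j => if i = j then 1 else 0, by
      simpa [LinearMap.pi_apply_eq_sum_univ φ Y] using hφ⟩
  · rintro ⟨x, hx⟩
    exact ⟨∑ i, LinearMap.toSpanSingleton R R (x i) ∘ₗ LinearMap.proj i, by simpa using hx⟩

theorem injective_smul_units_smul {Y : M} (hY : Function.Injective fun r : R => r • Y)
    (u : Rˣ) : Function.Injective fun r : R => r • u • Y := by
  intro r s h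
  simp only [Units.smul_def, smul_smul] at h
  exact (Units.mulRight u).injective (hY h)

theorem exists_units_smul_eq_of_span_singleton_eq {Y Z : M}
    (hY : Function.Injective fun r : R => r • Y) (hZ : Function.Injective fun r : R => r • Z)
    (h : span R {Y} = span R {Z}) : ∃ u : Rˣ, u • Y = Z := by
  obtain ⟨r, hr⟩ := mem_span_singleton.mp (h ▸ mem_span_singleton_self Z)
  obtain ⟨s, hs⟩ := mem_span_singleton.mp (h ▸ mem_span_singleton_self Y : Y ∈ span R {Z})
  have hsr : s * r = 1 := hY (by simp only [← smul_smul, hr, hs, one_smul])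
  have hrs : r * s = 1 := hZ (by simp only [← smul_smul, hr, hs, one_smul])
  exact ⟨⟨r, s, hrs, hsr⟩, hr⟩

theorem card_eq_card_span_singleton_mul_card_units (S : Set M)
    (hfree : ∀ Y ∈ S, Function.Injective fun r : R => r • Y)
    (hunits : ∀ Y ∈ S, ∀ u : Rˣ, u • Y ∈ S) :
    Nat.card S = Nat.card {N : Submodule R M // ∃ Y ∈ S, N = span R {Y}} * Nat.card Rˣ := by
  let f : S → {N : Submodule R M // ∃ Y ∈ S, N = span R {Y}} :=
    fun Y => ⟨span R {Y.1}, Y.1, Y.2, rfl⟩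
  have fiberEquiv (N) : Rˣ ≃ {Y // f Y = N} := by
    choose Y₀ hY₀ hN using N.2
    refine Equiv.ofBijective (fun u => ⟨⟨u • Y₀, hunits Y₀ hY₀ u⟩, ?_⟩) ⟨?_, ?_⟩
    · exact Subtype.ext ((span_singleton_group_smul_eq R u Y₀).trans hN.symm)
    · intro u v h
      exact Units.ext (hfree Y₀ hY₀ (congrArg (fun Y => Y.1.1) h))
    · rintro ⟨⟨Y, hY⟩, hfY⟩
      obtain ⟨u, hu⟩ := exists_units_smul_eq_of_span_singleton_eq (hfree Y₀ hY₀) (hfree Y hY)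
        (hN.symm.trans (congrArg Subtype.val hfY).symm)
      exact ⟨u, by simp [hu]⟩
  rw [Nat.card_congr ((Equiv.sigmaFiberEquiv f).symm.trans
    ((Equiv.sigmaCongrRight fun N => (fiberEquiv N).symm).trans (Equiv.sigmaEquivProd _ _))),
    Nat.card_prod]

end FreeCyclic

section Frames

variable {K V : Type*} [Field K] [Fintype K] [AddCommGroup V] [Module K V] [Finite V]

theorem card_compl_span_of_linearIndependent {k : ℕ} {v : Fin k → V}
    (hv : LinearIndependent K v) :
    Nat.card ((span K (Set.range v) : Set V)ᶜ : Set V) =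
      Fintype.card K ^ finrank K V - Fintype.card K ^ k := by
  rw [← Nat.card_eq_fintype_card, Nat.card_coe_set_eq, Set.ncard_compl, ← Nat.card_coe_set_eq,
    SetLike.coe_sort_coe, natCard_eq_pow_finrank (K := K) (V := V),
    natCard_eq_pow_finrank (K := K) (V := span K (Set.range v)), finrank_span_eq_card hv,
    Fintype.card_fin]

theorem card_linearIndependent_cons {y : V} (hy : y ≠ 0) (m : ℕ) :
    Nat.card {s : Fin m → V // LinearIndependent K (Fin.cons y s : Fin (m + 1) → V)} =
      ∏ i : Fin m, (Fintype.card K ^ finrank K V - Fintype.card K ^ (i + 1 : ℕ)) := by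
  induction m with
  | zero =>
    rw [Finset.univ_eq_empty, Finset.prod_empty, Nat.card_eq_one_iff_unique]
    refine ⟨⟨fun ⟨s, _⟩ ⟨t, _⟩ => Subtype.ext (Subsingleton.elim s t)⟩,
      ⟨⟨Fin.elim0, linearIndependent_finCons.mpr ⟨linearIndependent_empty_type, by simpa⟩⟩⟩⟩
  | succ m ih =>
    have key (s : Fin (m + 1) → V) : LinearIndependent K (Fin.cons y s : Fin (m + 2) → V) ↔
        LinearIndependent K (Fin.cons y (Fin.init s) : Fin (m + 1) → V) ∧
          s (Fin.last m) ∉ span K (Set.range (Fin.cons y (Fin.init s) : Fin (m + 1) → V)) := by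
      rw [← linearIndependent_finSnoc, ← Fin.cons_snoc_eq_snoc_cons, Fin.snoc_init_self]
    let e : {s : Fin (m + 1) → V // LinearIndependent K (Fin.cons y s : Fin (m + 2) → V)} ≃
        Σ t : {t : Fin m → V // LinearIndependent K (Fin.cons y t : Fin (m + 1) → V)},
          ((span K (Set.range (Fin.cons y t.1 : Fin (m + 1) → V)) : Set V)ᶜ : Set V) :=
      { toFun s := ⟨⟨Fin.init s.1, ((key s).mp s.2).1⟩, ⟨s.1 (Fin.last m), ((key s).mp s.2).2⟩⟩
        invFun p := ⟨Fin.snoc p.1.1 p.2.1,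
          (key _).mpr (by rw [Fin.init_snoc, Fin.snoc_last]; exact ⟨p.1.2, p.2.2⟩)⟩
        left_inv s := by simp
        right_inv p := Sigma.subtype_ext (by simp) (by simp) }
    have := Fintype.ofFinite {t : Fin m → V // LinearIndependent K (Fin.cons y t : Fin (m + 1) → V)}
    rw [Nat.card_congr e, Nat.card_sigma,
      Finset.sum_congr rfl fun t _ => card_compl_span_of_linearIndependent t.2, Finset.sum_const,
      Finset.card_univ, ← Nat.card_eq_fintype_card, ih, smul_eq_mul, Fin.prod_univ_castSucc]
    simp

theorem card_linearIndependent_pair_mem_span {y : V} (hy : y ≠ 0) (h2 : 2 ≤ finrank K V) :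
    Nat.card {s : Fin 2 → V | LinearIndependent K s ∧ y ∈ span K (Set.range s)} =
      (Fintype.card K ^ 2 - 1) * (Fintype.card K ^ finrank K V - Fintype.card K) := by
  have hsplit := Set.ncard_inter_add_ncard_sdiff_eq_ncard {s : Fin 2 → V | LinearIndependent K s}
    {s | y ∈ span K (Set.range s)}
  have hdiff : {s : Fin 2 → V | LinearIndependent K s} \ {s | y ∈ span K (Set.range s)} =
      {s | LinearIndependent K (Fin.cons y s : Fin 3 → V)} := by
    ext s
    exact linearIndependent_finCons.symm
  rw [hdiff, ← Nat.card_coe_set_eq, ← Nat.card_coe_set_eq, ← Nat.card_coe_set_eq,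
    Set.coe_ofPred, Set.coe_ofPred, card_linearIndependent h2, card_linearIndependent_cons hy,
    ← Set.ofPred_and] at hsplit
  simp only [Fin.prod_univ_two, Fin.val_zero, Fin.val_one, zero_add, pow_zero, pow_one,
    one_add_one_eq_two] at hsplit
  have hq : 1 ≤ Fintype.card K := Fintype.card_pos
  have hqq : Fintype.card K ≤ Fintype.card K ^ 2 := Nat.le_self_pow two_ne_zero _
  have hqQ : Fintype.card K ^ 2 ≤ Fintype.card K ^ finrank K V := Nat.pow_le_pow_right hq h2
  zify [hq, hqq, hqQ, hqq.trans hqQ, Nat.one_le_pow 2 _ hq, Nat.one_le_pow (finrank K V) _ hq]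
    at hsplit ⊢
  linear_combination hsplit

end Frames

namespace ternions

variable {F : Type} [Field F]

def mk (a b c : F) : ternions F := ⟨!![a, b; 0, c], rfl⟩

@[simp] lemma mk_val_00 (a b c : F) : (mk a b c).val 0 0 = a := rfl
@[simp] lemma mk_val_01 (a b c : F) : (mk a b c).val 0 1 = b := rfl
@[simp] lemma mk_val_11 (a b c : F) : (mk a b c).val 1 1 = c := rfl

lemma val_10 (r : ternions F) : r.val 1 0 = 0 := r.2

lemma ext {r s : ternions F} (h₀₀ : r.val 0 0 = s.val 0 0) (h₀₁ : r.val 0 1 = s.val 0 1)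
    (h₁₁ : r.val 1 1 = s.val 1 1) : r = s :=
  Subtype.ext <| Matrix.ext fun i j => by
    fin_cases i <;> fin_cases j <;> simp [h₀₀, h₀₁, h₁₁, val_10]

@[simp] lemma mul_val_00 (r s : ternions F) : (r.val * s.val) 0 0 = r.val 0 0 * s.val 0 0 := by
  simp [Matrix.mul_apply, val_10]

@[simp] lemma mul_val_01 (r s : ternions F) :
    (r.val * s.val) 0 1 = r.val 0 0 * s.val 0 1 + r.val 0 1 * s.val 1 1 := by
  simp [Matrix.mul_apply]

@[simp] lemma mul_val_11 (r s : ternions F) : (r.val * s.val) 1 1 = r.val 1 1 * s.val 1 1 := by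
  simp [Matrix.mul_apply, val_10]

def topLeftHom : ternions F →+* F where
  toFun r := r.val 0 0
  map_one' := by simp
  map_mul' := mul_val_00
  map_zero' := rfl
  map_add' _ _ := rfl

@[simp] lemma topLeftHom_apply (r : ternions F) : topLeftHom r = r.val 0 0 := rfl

def bottomRightHom : ternions F →+* F where
  toFun r := r.val 1 1
  map_one' := by simp
  map_mul' := mul_val_11
  map_zero' := rfl
  map_add' _ _ := rfl

def unitsEquiv : (ternions F)ˣ ≃ Fˣ × Fˣ × F where
  toFun u := (Units.map (topLeftHom : ternions F →+* F).toMonoidHom u,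
    Units.map (bottomRightHom : ternions F →+* F).toMonoidHom u, (u : ternions F).val 0 1)
  invFun p := ⟨mk p.1 p.2.2 p.2.1, mk p.1⁻¹ (-(p.1⁻¹ * p.2.2 * p.2.1⁻¹)) p.2.1⁻¹,
    ext (by simp) (by simp [← mul_assoc]) (by simp), ext (by simp) (by simp) (by simp)⟩
  left_inv u := Units.ext (ext rfl rfl rfl)
  right_inv p := by ext <;> rfl

variable {ι : Type*}

def vec (s : Fin 2 → ι → F) : ι → ternions F := fun i => mk 0 (s 0 i) (s 1 i)

@[simp] lemma vec_val_00 (s : Fin 2 → ι → F) (i : ι) : (vec s i).val 0 0 = 0 := rfl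
@[simp] lemma vec_val_01 (s : Fin 2 → ι → F) (i : ι) : (vec s i).val 0 1 = s 0 i := rfl
@[simp] lemma vec_val_11 (s : Fin 2 → ι → F) (i : ι) : (vec s i).val 1 1 = s 1 i := rfl

lemma vec_injective : Function.Injective (vec : (Fin 2 → ι → F) → ι → ternions F) := by
  intro s t h
  ext k i
  fin_cases k
  · exact congrArg (fun Y : ι → ternions F => (Y i).val 0 1) h
  · exact congrArg (fun Y : ι → ternions F => (Y i).val 1 1) h

lemma smul_vec (r : ternions F) (s : Fin 2 → ι → F) :
    r • vec s = vec ![r.val 0 0 • s 0 + r.val 0 1 • s 1, r.val 1 1 • s 1] :=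
  funext fun i => ext (by simp) (by simp) (by simp)

lemma eq_vec_of_val_00_eq_zero {Y : ι → ternions F} (hY : ∀ i, (Y i).val 0 0 = 0) :
    Y = vec ![fun i => (Y i).val 0 1, fun i => (Y i).val 1 1] :=
  funext fun i => ext (by simp [hY]) (by simp) (by simp)

lemma vec_zero : vec (0 : Fin 2 → ι → F) = 0 :=
  funext fun _ => ext rfl rfl rfl

lemma smul_vec_eq_zero_iff {r : ternions F} {s : Fin 2 → ι → F} :
    r • vec s = 0 ↔ r.val 0 0 • s 0 + r.val 0 1 • s 1 = 0 ∧ r.val 1 1 • s 1 = 0 := by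
  rw [smul_vec, ← vec_zero, vec_injective.eq_iff]
  simp [Matrix.cons_eq_zero_iff]

lemma injective_smul_vec_iff {s : Fin 2 → ι → F} :
    (Function.Injective fun r : ternions F => r • vec s) ↔ LinearIndependent F s := by
  simp only [Fintype.linearIndependent_iff, Fin.forall_fin_two, Fin.sum_univ_two]
  constructor
  · intro hinj g hg
    have hzero : mk (g 0) (g 1) 0 = 0 := hinj <| by
      simp only [zero_smul, smul_vec_eq_zero_iff]
      simpa using hg
    exact ⟨congrArg (fun r : ternions F => r.val 0 0) hzero,
      congrArg (fun r : ternions F => r.val 0 1) hzero⟩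
  · intro hs
    refine (injective_iff_map_eq_zero (LinearMap.toSpanSingleton (ternions F) _ (vec s))).mpr
      fun r hr => ?_
    obtain ⟨h₀, h₁⟩ := smul_vec_eq_zero_iff.mp hr
    obtain ⟨h₀₀, h₀₁⟩ := hs ![r.val 0 0, r.val 0 1] (by simpa using h₀)
    have hs₁ : s 1 ≠ 0 := fun h => one_ne_zero (hs ![0, 1] (by simp [h])).2
    have h₁₁ : r.val 1 1 = 0 := (smul_eq_zero.mp h₁).resolve_right hs₁
    exact ext (by simpa using h₀₀) (by simpa using h₀₁) (by simpa using h₁₁)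
lemma exists_val_11_ne_zero_of_injective {Y : ι → ternions F}
    (hY : Function.Injective fun r : ternions F => r • Y) : ∃ k, (Y k).val 1 1 ≠ 0 := by
  by_contra! h
  have : mk 0 0 1 = (0 : ternions F) :=
    hY <| show mk 0 0 1 • Y = (0 : ternions F) • Y from
      funext fun i => ext (by simp) (by simp [h i]) (by simp [h i])
  exact one_ne_zero (congrArg (fun r : ternions F => r.val 1 1) this)

lemma isUnimodular_of_val_00_ne_zero [Fintype ι] [DecidableEq ι] {Y : ι → ternions F} {j k : ι}
    (hj : (Y j).val 0 0 ≠ 0) (hk : (Y k).val 1 1 ≠ 0) : IsUnimodular (ternions F) Y := by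
  rw [isUnimodular_iff_exists_sum_mul_eq_one]
  refine ⟨Pi.single j (mk ((Y j).val 0 0)⁻¹
      (-(((Y j).val 0 0)⁻¹ * (Y k).val 0 1 * ((Y k).val 1 1)⁻¹)) 0) +
    Pi.single k (mk 0 0 ((Y k).val 1 1)⁻¹), ?_⟩
  simp only [Pi.add_apply, mul_add, Finset.sum_add_distrib, Pi.single_apply, mul_ite, mul_zero,
    Finset.sum_ite_eq', Finset.mem_univ, if_true]
  apply ext <;> simp [field]

lemma not_isUnimodular_of_val_00_eq_zero [Fintype ι] [DecidableEq ι] {Y : ι → ternions F}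
    (hY : ∀ i, (Y i).val 0 0 = 0) : ¬ IsUnimodular (ternions F) Y := by
  rw [isUnimodular_iff_exists_sum_mul_eq_one]
  rintro ⟨x, hx⟩
  simpa [hY] using congrArg topLeftHom hx

lemma injective_and_not_isUnimodular_iff [Fintype ι] [DecidableEq ι] {Y : ι → ternions F} :
    ((Function.Injective fun r : ternions F => r • Y) ∧ ¬ IsUnimodular (ternions F) Y) ↔
      ∃ s : Fin 2 → ι → F, LinearIndependent F s ∧ vec s = Y := by
  constructor
  · rintro ⟨hinj, hnot⟩
    obtain ⟨k, hk⟩ := exists_val_11_ne_zero_of_injective hinj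
    have h₀₀ : ∀ i, (Y i).val 0 0 = 0 := fun j => by
      by_contra hj
      exact hnot (isUnimodular_of_val_00_ne_zero hj hk)
    rw [eq_vec_of_val_00_eq_zero h₀₀, injective_smul_vec_iff] at hinj
    exact ⟨_, hinj, (eq_vec_of_val_00_eq_zero h₀₀).symm⟩
  · rintro ⟨s, hs, rfl⟩
    exact ⟨injective_smul_vec_iff.mpr hs, not_isUnimodular_of_val_00_eq_zero (vec_val_00 s)⟩

lemma vec_mem_span_vec_iff {y : ι → F} {s : Fin 2 → ι → F} [Fintype ι] :
    vec ![y, 0] ∈ span (ternions F) {vec s} ↔ y ∈ span F (Set.range s) := by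
  rw [mem_span_singleton, mem_span_range_iff_exists_fun]
  simp only [Fin.sum_univ_two, smul_vec, vec_injective.eq_iff]
  constructor
  · rintro ⟨r, hr⟩
    exact ⟨![r.val 0 0, r.val 0 1], by simpa using congrFun hr 0⟩
  · rintro ⟨g, hg⟩
    exact ⟨mk (g 0) (g 1) 0, by simp [hg]⟩

lemma exists_eq_vec_of_span_eq_rad {X : ι → ternions F}
    (hX : (span (ternions F)ᵐᵒᵖ (Set.range X) : Set (ternions F)) =
      {A : ternions F | A.val 0 0 = 0 ∧ A.val 1 1 = 0}) :
    ∃ y : ι → F, y ≠ 0 ∧ X = vec ![y, 0] := by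
  have hrad (i : ι) : (X i).val 0 0 = 0 ∧ (X i).val 1 1 = 0 :=
    hX.subset (subset_span (Set.mem_range_self i))
  refine ⟨fun i => (X i).val 0 1, fun hy => ?_, funext fun i => ext ?_ ?_ ?_⟩
  · have hX0 : span (ternions F)ᵐᵒᵖ (Set.range X) = ⊥ :=
      span_eq_bot.mpr <| Set.forall_mem_range.mpr fun i =>
        ext (hrad i).1 (congrFun hy i) (hrad i).2
    have hmem : mk 0 1 0 ∈ ({A : ternions F | A.val 0 0 = 0 ∧ A.val 1 1 = 0} : Set _) := ⟨rfl, rfl⟩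
    rw [← hX, hX0] at hmem
    exact one_ne_zero (congrArg (fun r : ternions F => r.val 0 1) ((mem_bot _).mp hmem))
  all_goals simp [hrad]

lemma card_units [Fintype F] :
    Nat.card (ternions F)ˣ = (Fintype.card F - 1) * ((Fintype.card F - 1) * Fintype.card F) := by
  rw [Nat.card_congr unitsEquiv, Nat.card_prod, Nat.card_prod, Nat.card_units,
    Nat.card_eq_fintype_card]

lemma card_generators_of_vec_mem_span [Fintype F] [Fintype ι] [DecidableEq ι] {y : ι → F}
    (hy : y ≠ 0) (hι : 2 ≤ Fintype.card ι) :
    Nat.card {Y : ι → ternions F | ((Function.Injective fun r : ternions F => r • Y) ∧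
      ¬ IsUnimodular (ternions F) Y) ∧ vec ![y, 0] ∈ span (ternions F) {Y}} =
      (Fintype.card F ^ 2 - 1) * (Fintype.card F ^ Fintype.card ι - Fintype.card F) := by
  rw [← finrank_fintype_fun_eq_card (R := F) (η := ι),
    ← card_linearIndependent_pair_mem_span hy (by rwa [finrank_fintype_fun_eq_card]),
    ← Nat.card_image_of_injective vec_injective]
  congr 2
  ext Y
  simp only [Set.mem_ofPred_eq, injective_and_not_isUnimodular_iff, Set.mem_image]
  constructor
  · rintro ⟨⟨s, hs, rfl⟩, hys⟩
    exact ⟨s, ⟨hs, vec_mem_span_vec_iff.mp hys⟩, rfl⟩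
  · rintro ⟨s, ⟨hs, hys⟩, rfl⟩
    exact ⟨⟨s, hs, rfl⟩, vec_mem_span_vec_iff.mpr hys⟩

end ternions

/-- Over `F = GF(q)`, if the coordinates of `X ∈ R^{n+1}` generate as right ideal exactly
the Jacobson radical `rad R`, then the number `N₂` of non-unimodular free cyclic
submodules containing `X` satisfies `(q - 1)·N₂ = (q + 1)·(q^n - 1)`. -/
theorem ternion_count_through_rad_vector (F : Type) [Field F] [Fintype F] (q n : ℕ)
    (hq : Fintype.card F = q) (hn : 1 ≤ n) (X : Fin (n + 1) → ternions F)
    (hX : (Submodule.span (ternions F)ᵐᵒᵖ (Set.range X) : Set (ternions F)) =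
      {A : ternions F | A.val 0 0 = 0 ∧ A.val 1 1 = 0}) :
    (q - 1) *
        Nat.card {M : Submodule (ternions F) (Fin (n + 1) → ternions F) //
          (∃ Y : Fin (n + 1) → ternions F, M = Submodule.span (ternions F) {Y} ∧
            Function.Injective (fun r : ternions F => r • Y) ∧
            ¬ ∃ φ : (Fin (n + 1) → ternions F) →ₗ[ternions F] ternions F, φ Y = 1) ∧
          X ∈ M} =
      (q + 1) * (q ^ n - 1) := by
  classical
  obtain ⟨y, hy, rfl⟩ := ternions.exists_eq_vec_of_span_eq_rad hX
  let S : Set (Fin (n + 1) → ternions F) := {Y | ((Function.Injective fun r : ternions F => r • Y) ∧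
    ¬ IsUnimodular (ternions F) Y) ∧ ternions.vec ![y, 0] ∈ span (ternions F) {Y}}
  have hcount := card_eq_card_span_singleton_mul_card_units S (fun Y hY => hY.1.1)
    fun Y hY u => ⟨⟨injective_smul_units_smul hY.1.1 u, fun h => hY.1.2 h.of_units_smul⟩,
      (span_singleton_group_smul_eq (ternions F) u Y).symm ▸ hY.2⟩
  rw [ternions.card_generators_of_vec_mem_span hy (by rw [Fintype.card_fin]; omega),
    ternions.card_units, Fintype.card_fin, hq] at hcount
  have hq2 : 2 ≤ q := hq ▸ Fintype.one_lt_card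
  calc _ = (q - 1) * Nat.card {N // ∃ Y ∈ S, N = span (ternions F) {Y}} := by
        congr 1
        exact Nat.card_congr (Equiv.subtypeEquivRight fun N =>
          ⟨fun ⟨⟨Y, hN, hY⟩, hXN⟩ => ⟨Y, ⟨hY, hN ▸ hXN⟩, hN⟩,
            fun ⟨Y, ⟨hY, hXY⟩, hN⟩ => ⟨⟨Y, hN, hY⟩, hN ▸ hXY⟩⟩)
    _ = _ := by
      refine Nat.eq_of_mul_eq_mul_right (Nat.mul_pos (by omega : 0 < q - 1) (by omega : 0 < q)) ?_
      zify [show 1 ≤ q by omega, Nat.one_le_pow n q (by omega), Nat.one_le_pow 2 q (by omega),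
        Nat.le_self_pow (Nat.succ_ne_zero n) q] at hcount ⊢
      linear_combination hcount.symm
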